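/- Assume that the set of odd integers n ≥ 1 with D_n = rad(n+1) equals {3, 5, 9, 11, 27, 29, 35, 59}. Then the set {n ≥ 1 : B'_n(x) ∈ ℤ[x]} equals {1, 2, 4, 6, 10, 12, 28, 30, 36, 60}; in particular, it is finite. -/

import Mathlib

/-- A rational polynomial has only integral coefficients. -/
def IsIntPoly (f : Polynomial ℚ) : Prop := ∀ i, (f.coeff i).den = 1

/-- The least positive integer `d` such that `d • f` has only integral coefficients. -/
noncomputable def polyDenom (f : Polynomial ℚ) : ℕ :=
  sInf {d : ℕ | 0 < d ∧ IsIntPoly ((d : ℚ) • f)}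

/-- Sum of base-`p` digits of `n`. -/
def sd (p n : ℕ) : ℕ := (Nat.digits p n).sum

/-- Radical (squarefree kernel) of `n`. -/
def rad (n : ℕ) : ℕ := ∏ p ∈ n.primeFactors, p

/-- `D n = denom (B_n(x) - B_n)`. -/
noncomputable def D (n : ℕ) : ℕ :=
  polyDenom (Polynomial.bernoulli n - Polynomial.C (bernoulli n))

/-- `DB n = denom (B_n(x))`. -/
noncomputable def DB (n : ℕ) : ℕ := polyDenom (Polynomial.bernoulli n)

/-- `D̂ n`: product of primes `p` with `p ∤ n` and `s_p(n) ≥ p`.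
(Any such prime satisfies `p ≤ s_p(n) ≤ n`.) -/
def Dhat (n : ℕ) : ℕ :=
  ∏ p ∈ (Finset.range (n + 1)).filter (fun p => p.Prime ∧ ¬ p ∣ n ∧ p ≤ sd p n), p

/-- `D̃ n`: product of primes `p` with `p ∣ n` and `s_p(n) ≥ p`. -/
def Dtilde (n : ℕ) : ℕ :=
  ∏ p ∈ (Finset.range (n + 1)).filter (fun p => p.Prime ∧ p ∣ n ∧ p ≤ sd p n), p

/-- `Ď n`: product of primes `p` with `p ∣ n` and `s_p(n) < p`. -/
def Dcheck (n : ℕ) : ℕ :=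
  ∏ p ∈ (Finset.range (n + 1)).filter (fun p => p.Prime ∧ p ∣ n ∧ sd p n < p), p

/-- `D⁺ n`: product of primes `p` with `p > √n` and `s_p(n) ≥ p`. -/
def Dplus (n : ℕ) : ℕ :=
  ∏ p ∈ (Finset.range (n + 1)).filter (fun p => p.Prime ∧ n < p ^ 2 ∧ p ≤ sd p n), p

/-- The sum-of-powers polynomial `S_n(x) = (B_{n+1}(x) - B_{n+1}) / (n+1)`. -/
noncomputable def Spoly (n : ℕ) : Polynomial ℚ :=
  Polynomial.C (((n : ℚ) + 1)⁻¹) *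
    (Polynomial.bernoulli (n + 1) - Polynomial.C (bernoulli (n + 1)))

/-! `B_n' = n B_{n-1}`, so `B_n'` is integral iff `polyDenom (B_{n-1}) ∣ n`. For odd `n > 1`
this fails because the constant term `B_{n-1}` has even denominator. For even `n = m + 1` we
have `B_m = 0`, so `D m = polyDenom (B_m)`. By von Staudt–Clausen every coefficient
`B_{m-i} * C(m, i)` has squarefree denominator, so `polyDenom (B_m)` is squarefree; and every
prime `p ∣ m + 1` divides the denominator of the coefficient `B_{p-1} * C(m, p-1)`, since
`p ∣ den B_{p-1}` and, by Lucas, `C(m, p-1) ≡ 1 [MOD p]`. Hence `polyDenom (B_m) ∣ m + 1` iff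
`D m = rad (m + 1)`, and the hypothesis lists exactly those `m`. -/

open Finset
open scoped Polynomial

theorem Rat.den_dvd_iff_den_natCast_mul_eq_one {q : ℚ} {n : ℕ} :
    q.den ∣ n ↔ ((n : ℚ) * q).den = 1 := by
  constructor
  · rintro ⟨c, rfl⟩
    rw [Nat.cast_mul, mul_right_comm, mul_comm (q.den : ℚ), Rat.mul_den_eq_num]
    exact_mod_cast Rat.den_intCast (q.num * c)
  · intro h
    rcases eq_or_ne n 0 with rfl | hn
    · exact dvd_zero _
    · have hq : q = ((n : ℚ) * q).num / (n : ℤ) := by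
        rw [(Rat.den_eq_one_iff _).1 h]; push_cast; field_simp
      rw [hq, ← Rat.divInt_eq_div]
      exact Int.natCast_dvd_natCast.1 (Rat.den_dvd _ _)

theorem Nat.Prime.dvd_den_mul_natCast {p : ℕ} (hp : p.Prime) {a : ℚ} {c : ℕ}
    (ha : p ∣ a.den) (hc : ¬ p ∣ c) : p ∣ (a * c).den := by
  have hc0 : c ≠ 0 := by rintro rfl; exact hc (dvd_zero p)
  have hdvd : a.den ∣ (a * c).den * c := by
    have := Rat.mul_den_dvd (a * c) (c : ℚ)⁻¹
    rwa [mul_inv_cancel_right₀ (Nat.cast_ne_zero.2 hc0), Rat.inv_natCast_den_of_pos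
      (Nat.pos_of_ne_zero hc0)] at this
  exact (hp.dvd_mul.1 (ha.trans hdvd)).resolve_right hc

theorem Finset.squarefree_lcm {ι : Type*} {s : Finset ι} {f : ι → ℕ}
    (hf : ∀ i ∈ s, Squarefree (f i)) : Squarefree (s.lcm f) := by
  have hf0 : ∀ i ∈ s, f i ≠ 0 := fun i hi => (hf i hi).ne_zero
  rw [Nat.squarefree_iff_factorization_le_one (by simpa [Finset.lcm_eq_zero_iff] using hf0)]
  intro p
  rw [Finset.factorization_lcm hf0]
  exact Finset.sup_le fun i hi => (hf i hi).natFactorization_le_one p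

theorem Squarefree.dvd_rad {d n : ℕ} (hd : Squarefree d) (hdn : d ∣ n) (hn : n ≠ 0) :
    d ∣ rad n := by
  rw [← Nat.prod_primeFactors_of_squarefree hd]
  exact Finset.prod_dvd_prod_of_subset _ _ _ (Nat.primeFactors_mono hdn hn)

theorem isIntPoly_natCast_smul_iff {f : ℚ[X]} {d : ℕ} :
    IsIntPoly ((d : ℚ) • f) ↔ ∀ i, (f.coeff i).den ∣ d := by
  simp only [IsIntPoly, Polynomial.coeff_smul, smul_eq_mul, Rat.den_dvd_iff_den_natCast_mul_eq_one]

theorem Polynomial.lcm_den_coeff_dvd_iff {f : ℚ[X]} {d : ℕ} :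
    (f.support.lcm fun i => (f.coeff i).den) ∣ d ↔ ∀ i, (f.coeff i).den ∣ d := by
  rw [Finset.lcm_dvd_iff]
  refine ⟨fun h i => ?_, fun h i _ => h i⟩
  by_cases hi : i ∈ f.support
  · exact h i hi
  · simp [Polynomial.notMem_support_iff.1 hi]

theorem polyDenom_eq_lcm (f : ℚ[X]) : polyDenom f = f.support.lcm fun i => (f.coeff i).den := by
  set L := f.support.lcm fun i => (f.coeff i).den
  have hL : 0 < L := Nat.pos_of_ne_zero <| by simp [L, Finset.lcm_eq_zero_iff]
  have hdvd : ∀ d : ℕ, IsIntPoly ((d : ℚ) • f) ↔ L ∣ d := fun d => by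
    rw [isIntPoly_natCast_smul_iff, Polynomial.lcm_den_coeff_dvd_iff]
  unfold polyDenom
  simp_rw [hdvd]
  exact le_antisymm (Nat.sInf_le ⟨hL, dvd_rfl⟩)
    (le_csInf ⟨L, hL, dvd_rfl⟩ fun d hd => Nat.le_of_dvd hd.1 hd.2)

theorem polyDenom_dvd_iff {f : ℚ[X]} {d : ℕ} : polyDenom f ∣ d ↔ ∀ i, (f.coeff i).den ∣ d := by
  rw [polyDenom_eq_lcm, Polynomial.lcm_den_coeff_dvd_iff]

theorem polyDenom_dvd_iff_isIntPoly {f : ℚ[X]} {d : ℕ} :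
    polyDenom f ∣ d ↔ IsIntPoly ((d : ℚ) • f) := by
  rw [polyDenom_dvd_iff, isIntPoly_natCast_smul_iff]

theorem den_coeff_dvd_polyDenom (f : ℚ[X]) (i : ℕ) : (f.coeff i).den ∣ polyDenom f :=
  polyDenom_dvd_iff.1 dvd_rfl i

theorem squarefree_polyDenom {f : ℚ[X]} (hf : ∀ i, Squarefree (f.coeff i).den) :
    Squarefree (polyDenom f) := by
  rw [polyDenom_eq_lcm]
  exact Finset.squarefree_lcm fun i _ => hf i

theorem exists_prod_mul_sum_one_div_eq_intCast (S : Finset ℕ) :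
    ∃ w : ℤ, (∏ q ∈ S, (q : ℚ)) * ∑ q ∈ S, (1 : ℚ) / q = w := by
  by_cases h0 : 0 ∈ S
  · exact ⟨0, by rw [Finset.prod_eq_zero h0 Nat.cast_zero, zero_mul, Int.cast_zero]⟩
  · refine ⟨∑ q ∈ S, ∏ r ∈ S.erase q, (r : ℤ), ?_⟩
    push_cast
    rw [Finset.mul_sum]
    refine Finset.sum_congr rfl fun q hq => ?_
    have hq0 : (q : ℚ) ≠ 0 := Nat.cast_ne_zero.2 (ne_of_mem_of_not_mem hq h0)
    rw [← Finset.mul_prod_erase S _ hq]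
    field_simp

theorem den_dvd_prod_of_add_sum_one_div_eq_intCast {S : Finset ℕ} {x : ℚ} {z : ℤ}
    (h : x + ∑ q ∈ S, (1 : ℚ) / q = z) : x.den ∣ ∏ q ∈ S, q := by
  obtain ⟨w, hw⟩ := exists_prod_mul_sum_one_div_eq_intCast S
  have hx : ((∏ q ∈ S, q : ℕ) : ℚ) * x = ((∏ q ∈ S, (q : ℤ)) * z - w : ℤ) := by
    push_cast
    rw [← hw, ← h]
    ring
  rw [Rat.den_dvd_iff_den_natCast_mul_eq_one, hx, Rat.den_intCast]

theorem dvd_den_of_add_sum_one_div_eq_intCast {S : Finset ℕ} (hS : ∀ q ∈ S, q.Prime)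
    {p : ℕ} (hp : p ∈ S) {x : ℚ} {z : ℤ} (h : x + ∑ q ∈ S, (1 : ℚ) / q = z) : p ∣ x.den := by
  have hpp := hS p hp
  have hy : (x + 1 / p).den ∣ ∏ q ∈ S.erase p, q :=
    den_dvd_prod_of_add_sum_one_div_eq_intCast (z := z) <| by
      rw [add_assoc, Finset.add_sum_erase S (fun q : ℕ => (1 : ℚ) / q) hp, h]
  have hpy : ¬ p ∣ (x + 1 / p).den := fun hd => by
    obtain ⟨q, hq, hpq⟩ := (Prime.dvd_finsetProd_iff hpp.prime _).1 (hd.trans hy)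
    exact Finset.ne_of_mem_erase hq
      ((Nat.prime_dvd_prime_iff_eq hpp (hS q (Finset.mem_of_mem_erase hq))).1 hpq).symm
  have hden : p ∣ (x + 1 / p).den * x.den := by
    have := Rat.sub_den_dvd (x + 1 / p) x
    rw [add_sub_cancel_left, one_div, Rat.inv_natCast_den_of_pos hpp.pos] at this
    rwa [one_div]
  exact (hpp.dvd_mul.1 hden).resolve_left hpy

theorem den_bernoulli_two_mul (k : ℕ) :
    (bernoulli (2 * k)).den = ∏ p ∈ range (2 * k + 2) with p.Prime ∧ (p - 1) ∣ 2 * k, p := by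
  obtain ⟨z, hz⟩ := Bernoulli.vonStaudt_clausen k
  have hprime : ∀ p ∈ {p ∈ range (2 * k + 2) | p.Prime ∧ (p - 1) ∣ 2 * k}, p.Prime :=
    fun p hp => (mem_filter.1 hp).2.1
  exact Nat.dvd_antisymm (den_dvd_prod_of_add_sum_one_div_eq_intCast hz.symm)
    (Finset.prod_primes_dvd _ (fun p hp => (hprime p hp).prime)
      fun p hp => dvd_den_of_add_sum_one_div_eq_intCast hprime hp hz.symm)

theorem den_bernoulli_one : (bernoulli 1).den = 2 := by
  rw [bernoulli_one]
  norm_num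

theorem squarefree_den_bernoulli (n : ℕ) : Squarefree (bernoulli n).den := by
  rcases Nat.even_or_odd n with ⟨k, rfl⟩ | hodd
  · rw [← two_mul, den_bernoulli_two_mul]
    refine Finset.squarefree_prod_of_pairwise_isCoprime (fun p hp q hq hpq => ?_)
      fun p hp => (mem_filter.1 hp).2.1.prime.squarefree
    exact Nat.coprime_iff_isRelPrime.1 <|
      (Nat.coprime_primes (mem_filter.1 hp).2.1 (mem_filter.1 hq).2.1).2 hpq
  · rcases eq_or_ne n 1 with rfl | hn
    · rw [den_bernoulli_one]
      exact Nat.prime_two.prime.squarefree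
    · rw [bernoulli_eq_zero_of_odd hodd (by grind [Odd.pos hodd]), Rat.den_zero]
      exact squarefree_one

theorem Nat.Prime.dvd_den_bernoulli {p n : ℕ} (hp : p.Prime) (hn : Even n) (hn0 : n ≠ 0)
    (hpn : (p - 1) ∣ n) : p ∣ (bernoulli n).den := by
  obtain ⟨k, rfl⟩ := hn
  rw [← two_mul, den_bernoulli_two_mul]
  have := Nat.le_of_dvd (Nat.pos_of_ne_zero hn0) hpn
  exact Finset.dvd_prod_of_mem _ (mem_filter.2 ⟨mem_range.2 (by omega), hp, by rwa [two_mul]⟩)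

theorem Nat.Prime.dvd_den_bernoulli_sub_one {p : ℕ} (hp : p.Prime) :
    p ∣ (bernoulli (p - 1)).den := by
  rcases hp.eq_two_or_odd' with rfl | hodd
  · rw [show 2 - 1 = 1 from rfl, den_bernoulli_one]
  · exact hp.dvd_den_bernoulli (Nat.Odd.sub_odd hodd odd_one) (by have := hp.two_le; omega) dvd_rfl

theorem two_dvd_den_bernoulli {n : ℕ} (hn : Even n) (hn0 : n ≠ 0) : 2 ∣ (bernoulli n).den :=
  Nat.prime_two.dvd_den_bernoulli hn hn0 (one_dvd n)

theorem Nat.choose_sub_one_modEq_one {p m : ℕ} (hp : p.Prime) (hpm : p ∣ m + 1) :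
    m.choose (p - 1) ≡ 1 [MOD p] := by
  have := Fact.mk hp
  have hlt : p - 1 < p := Nat.sub_lt hp.pos one_pos
  have hmod : m % p = p - 1 := by
    obtain ⟨k, hk⟩ := hpm
    obtain ⟨k, rfl⟩ : ∃ k', k = k' + 1 := ⟨k - 1, by rcases k with _ | k <;> simp_all⟩
    have hm : m = (p - 1) + p * k := by
      have := hp.one_le
      zify [this] at hk ⊢
      linear_combination hk
    rw [hm, Nat.add_mul_mod_self_left, Nat.mod_eq_of_lt hlt]
  calc m.choose (p - 1)
      ≡ (m % p).choose ((p - 1) % p) * (m / p).choose ((p - 1) / p) [MOD p] :=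
        Choose.choose_modEq_choose_mod_mul_choose_div_nat
    _ = 1 := by
      rw [hmod, Nat.mod_eq_of_lt hlt, Nat.div_eq_of_lt hlt, Nat.choose_self,
        Nat.choose_zero_right]

theorem den_coeff_bernoulli_dvd (n i : ℕ) :
    ((Polynomial.bernoulli n).coeff i).den ∣ (bernoulli (n - i)).den := by
  rw [Polynomial.coeff_bernoulli]
  split_ifs
  · simpa using Rat.mul_den_dvd (bernoulli (n - i)) (n.choose i)
  · simp

theorem squarefree_polyDenom_bernoulli (n : ℕ) :
    Squarefree (polyDenom (Polynomial.bernoulli n)) :=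
  squarefree_polyDenom fun i =>
    (squarefree_den_bernoulli _).squarefree_of_dvd (den_coeff_bernoulli_dvd n i)

theorem Nat.Prime.dvd_polyDenom_bernoulli {p m : ℕ} (hp : p.Prime) (hpm : p ∣ m + 1)
    (hle : p ≤ m) : p ∣ polyDenom (Polynomial.bernoulli m) := by
  have hcoeff : (Polynomial.bernoulli m).coeff (m - (p - 1))
      = bernoulli (p - 1) * m.choose (p - 1) := by
    rw [Polynomial.coeff_bernoulli, if_pos (Nat.sub_le _ _), Nat.sub_sub_self (by omega),
      Nat.choose_symm (by omega)]
  have hchoose : ¬ p ∣ m.choose (p - 1) := by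
    rw [Nat.dvd_iff_mod_eq_zero, Nat.choose_sub_one_modEq_one hp hpm, Nat.mod_eq_of_lt hp.one_lt]
    exact one_ne_zero
  exact (hp.dvd_den_mul_natCast hp.dvd_den_bernoulli_sub_one hchoose).trans
    (hcoeff ▸ den_coeff_dvd_polyDenom _ _)

theorem isIntPoly_derivative_bernoulli_iff (n : ℕ) :
    IsIntPoly (Polynomial.derivative (Polynomial.bernoulli n))
      ↔ polyDenom (Polynomial.bernoulli (n - 1)) ∣ n := by
  rw [Polynomial.derivative_bernoulli, polyDenom_dvd_iff_isIntPoly, ← nsmul_eq_mul,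
    ← Nat.cast_smul_eq_nsmul ℚ]

theorem isIntPoly_derivative_bernoulli_of_le_two {n : ℕ} (hn : n ≤ 2) :
    IsIntPoly (Polynomial.derivative (Polynomial.bernoulli n)) := by
  rw [isIntPoly_derivative_bernoulli_iff, polyDenom_dvd_iff]
  intro i
  refine (den_coeff_bernoulli_dvd _ i).trans ?_
  interval_cases n <;> rcases i with _ | i <;> simp [den_bernoulli_one, -bernoulli_one]

theorem not_isIntPoly_derivative_bernoulli_of_odd {n : ℕ} (hn : Odd n) (h1 : 1 < n) :
    ¬ IsIntPoly (Polynomial.derivative (Polynomial.bernoulli n)) := by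
  rw [isIntPoly_derivative_bernoulli_iff]
  intro h
  have h2 : 2 ∣ ((Polynomial.bernoulli (n - 1)).coeff 0).den := by
    rw [Polynomial.coeff_bernoulli, if_pos (Nat.zero_le _), Nat.sub_zero, Nat.choose_zero_right,
      Nat.cast_one, mul_one]
    exact two_dvd_den_bernoulli (Nat.Odd.sub_odd hn odd_one) (by omega)
  exact Nat.not_even_iff_odd.2 hn
    (even_iff_two_dvd.2 ((h2.trans (den_coeff_dvd_polyDenom _ 0)).trans h))

theorem D_eq_polyDenom_bernoulli {m : ℕ} (hm : Odd m) (h1 : 1 < m) :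
    D m = polyDenom (Polynomial.bernoulli m) := by
  rw [D, bernoulli_eq_zero_of_odd hm h1, map_zero, sub_zero]

theorem polyDenom_bernoulli_dvd_succ_iff {m : ℕ} (hm : Odd m) (h1 : 1 < m) :
    polyDenom (Polynomial.bernoulli m) ∣ m + 1
      ↔ polyDenom (Polynomial.bernoulli m) = rad (m + 1) := by
  refine ⟨fun h => Nat.dvd_antisymm ((squarefree_polyDenom_bernoulli m).dvd_rad h (by omega)) ?_,
    fun h => h ▸ Nat.prod_primeFactors_dvd (m + 1)⟩
  refine Finset.prod_primes_dvd _ (fun q hq => (Nat.prime_of_mem_primeFactors hq).prime)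
    fun q hq => ?_
  have hqp := Nat.prime_of_mem_primeFactors hq
  have hqm := Nat.dvd_of_mem_primeFactors hq
  -- `m + 1` is even and at least 4, hence not prime, so `q ≤ m`
  have hne : q ≠ m + 1 := by
    rintro rfl
    have := (hqp.even_iff).1 hm.add_one
    omega
  exact hqp.dvd_polyDenom_bernoulli hqm (by have := Nat.le_of_dvd (by omega) hqm; omega)

theorem isIntPoly_derivative_bernoulli_succ_iff {m : ℕ} (hm : Odd m) (h1 : 1 < m) :
    IsIntPoly (Polynomial.derivative (Polynomial.bernoulli (m + 1))) ↔ D m = rad (m + 1) := by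
  rw [isIntPoly_derivative_bernoulli_iff, Nat.add_sub_cancel,
    polyDenom_bernoulli_dvd_succ_iff hm h1, D_eq_polyDenom_bernoulli hm h1]

/-- If the set of odd `n ≥ 1` with `D n = rad (n+1)` equals
`{3, 5, 9, 11, 27, 29, 35, 59}`, then `{n ≥ 1 : B'_n(x) ∈ ℤ[x]}` equals
`{1, 2, 4, 6, 10, 12, 28, 30, 36, 60}`; in particular, it is finite. -/
theorem stmt_16
    (h : {n : ℕ | 1 ≤ n ∧ Odd n ∧ D n = rad (n + 1)} =
      ({3, 5, 9, 11, 27, 29, 35, 59} : Set ℕ)) :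
    {n : ℕ | 1 ≤ n ∧ IsIntPoly (Polynomial.derivative (Polynomial.bernoulli n))} =
      ({1, 2, 4, 6, 10, 12, 28, 30, 36, 60} : Set ℕ) ∧
    Set.Finite {n : ℕ | 1 ≤ n ∧
      IsIntPoly (Polynomial.derivative (Polynomial.bernoulli n))} := by
  have key : {n : ℕ | 1 ≤ n ∧ IsIntPoly (Polynomial.derivative (Polynomial.bernoulli n))}
      = ({1, 2, 4, 6, 10, 12, 28, 30, 36, 60} : Set ℕ) := by
    ext n
    simp only [Set.mem_ofPred_eq, Set.mem_insert_iff, Set.mem_singleton_iff]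
    rcases Nat.lt_or_ge n 3 with hn | hn
    · have hint := isIntPoly_derivative_bernoulli_of_le_two (n := n) (by omega)
      interval_cases n <;> simp_all
    rcases Nat.even_or_odd n with heven | hodd
    · obtain ⟨m, rfl⟩ : ∃ m, n = m + 1 := ⟨n - 1, by omega⟩
      have hm : Odd m := Nat.not_even_iff_odd.1 (Nat.even_add_one.1 heven)
      have hmem := Set.ext_iff.1 h m
      simp only [Set.mem_ofPred_eq, Set.mem_insert_iff, Set.mem_singleton_iff] at hmem
      rw [isIntPoly_derivative_bernoulli_succ_iff hm (by omega)]
      constructor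
      · rintro ⟨-, hD⟩
        have := hmem.1 ⟨by omega, hm, hD⟩
        omega
      · intro hm'
        exact ⟨by omega, (hmem.2 (by omega)).2.2⟩
    · obtain ⟨k, rfl⟩ := hodd
      simp only [not_isIntPoly_derivative_bernoulli_of_odd ⟨k, rfl⟩ (by omega), and_false,
        false_iff]
      omega
  exact ⟨key, key ▸ Set.toFinite _⟩
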